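/- arXiv:2307.12702 — 4 statements merged into one kernel-verified Lean document; each statement's English description precedes it below -/
import Mathlib

section
/- A real 2n×2n antisymmetric matrix β anticommutes with Ω = Iₙ ⊗ J (where J = [[0,1],[-1,0]]) if and only if β can be written as β = X ⊗ σ_x + Z ⊗ σ_z for some real antisymmetric n×n matrices X and Z, where σ_x = [[0,1],[1,0]] and σ_z = [[1,0],[0,-1]]. -/
/-!
Writing `β` in 2×2 blocks, `β * Ω + Ω * β = 0` says that every block anticommutes with `J`, i.e.
lies in the span of `σx` and `σz`; so `β = X ⊗ σx + Z ⊗ σz`, with `X` and `Z` read off from the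
`(·, 0) (·, 1)` and `(·, 0) (·, 0)` entries. As `σx` and `σz` are symmetric,
`βᵀ = Xᵀ ⊗ σx + Zᵀ ⊗ σz`, and uniqueness of the coefficients turns `βᵀ = -β` into the
antisymmetry of `X` and `Z`.
-/

open Matrix Kronecker

namespace Matrix

variable {ι R : Type*}

section Ring

variable [Ring R]

def symplecticJ : Matrix (Fin 2) (Fin 2) R := !![0, 1; -1, 0]

def pauliX : Matrix (Fin 2) (Fin 2) R := !![0, 1; 1, 0]

def pauliZ : Matrix (Fin 2) (Fin 2) R := !![1, 0; 0, -1]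

theorem pauliX_mul_symplecticJ_add_symplecticJ_mul_pauliX :
    pauliX * symplecticJ + symplecticJ * pauliX = (0 : Matrix (Fin 2) (Fin 2) R) := by
  ext i j
  fin_cases i <;> fin_cases j <;> simp [pauliX, symplecticJ]

theorem pauliZ_mul_symplecticJ_add_symplecticJ_mul_pauliZ :
    pauliZ * symplecticJ + symplecticJ * pauliZ = (0 : Matrix (Fin 2) (Fin 2) R) := by
  ext i j
  fin_cases i <;> fin_cases j <;> simp [pauliZ, symplecticJ]

theorem transpose_pauliX : (pauliX : Matrix (Fin 2) (Fin 2) R)ᵀ = pauliX := by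
  ext i j
  fin_cases i <;> fin_cases j <;> rfl

theorem transpose_pauliZ : (pauliZ : Matrix (Fin 2) (Fin 2) R)ᵀ = pauliZ := by
  ext i j
  fin_cases i <;> fin_cases j <;> rfl

theorem neg_kronecker {l m n p : Type*} (A : Matrix l m R) (B : Matrix n p R) :
    (-A) ⊗ₖ B = -(A ⊗ₖ B) := by
  ext
  simp [kroneckerMap_apply]

theorem submatrix_kronecker_pauli_zero_one (X Z : Matrix ι ι R) :
    (X ⊗ₖ pauliX + Z ⊗ₖ pauliZ).submatrix (·, 0) (·, 1) = X := by
  ext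
  simp [pauliX, pauliZ]

theorem submatrix_kronecker_pauli_zero_zero (X Z : Matrix ι ι R) :
    (X ⊗ₖ pauliX + Z ⊗ₖ pauliZ).submatrix (·, 0) (·, 0) = Z := by
  ext
  simp [pauliX, pauliZ]

theorem kronecker_pauli_inj {X Z X' Z' : Matrix ι ι R} :
    X ⊗ₖ pauliX + Z ⊗ₖ pauliZ = X' ⊗ₖ pauliX + Z' ⊗ₖ pauliZ ↔ X = X' ∧ Z = Z' := by
  refine ⟨fun h => ⟨?_, ?_⟩, fun ⟨hX, hZ⟩ => hX ▸ hZ ▸ rfl⟩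
  · rw [← submatrix_kronecker_pauli_zero_one X Z, h, submatrix_kronecker_pauli_zero_one]
  · rw [← submatrix_kronecker_pauli_zero_zero X Z, h, submatrix_kronecker_pauli_zero_zero]

theorem transpose_kronecker_pauli (X Z : Matrix ι ι R) :
    (X ⊗ₖ pauliX + Z ⊗ₖ pauliZ)ᵀ = Xᵀ ⊗ₖ pauliX + Zᵀ ⊗ₖ pauliZ := by
  rw [transpose_add, ← kroneckerMap_transpose, ← kroneckerMap_transpose, transpose_pauliX,
    transpose_pauliZ]

theorem transpose_kronecker_pauli_eq_neg_iff (X Z : Matrix ι ι R) :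
    (X ⊗ₖ pauliX + Z ⊗ₖ pauliZ)ᵀ = -(X ⊗ₖ pauliX + Z ⊗ₖ pauliZ) ↔ Xᵀ = -X ∧ Zᵀ = -Z := by
  rw [transpose_kronecker_pauli, neg_add, ← neg_kronecker, ← neg_kronecker, kronecker_pauli_inj]

theorem eq_kronecker_pauli_of_anticommute [Fintype ι] [DecidableEq ι]
    {β : Matrix (ι × Fin 2) (ι × Fin 2) R}
    (h : β * (1 ⊗ₖ symplecticJ) + (1 ⊗ₖ symplecticJ) * β = 0) :
    β = β.submatrix (·, 0) (·, 1) ⊗ₖ pauliX + β.submatrix (·, 0) (·, 0) ⊗ₖ pauliZ := by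
  have entry (p q) := congr_fun₂ h p q
  simp only [Matrix.add_apply, mul_apply, Fintype.sum_prod_type, one_apply, Fin.sum_univ_two,
    kroneckerMap_apply, Matrix.zero_apply] at entry
  have off_diag (i j : ι) : β (i, 1) (j, 0) = β (i, 0) (j, 1) := by
    have := entry (i, 0) (j, 0)
    simp [symplecticJ] at this
    exact (neg_add_eq_zero.mp this).symm
  have diag (i j : ι) : β (i, 1) (j, 1) = -β (i, 0) (j, 0) := by
    have := entry (i, 0) (j, 1)
    simp [symplecticJ] at this
    exact eq_neg_of_add_eq_zero_right this
  ext ⟨i, a⟩ ⟨j, b⟩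
  fin_cases a <;> fin_cases b <;> simp [pauliX, pauliZ, off_diag, diag]

end Ring

section CommRing

variable [CommRing R] [Fintype ι] [DecidableEq ι]

theorem kronecker_mul_one_kronecker_add_one_kronecker_mul {n : Type*} [Fintype n]
    (A : Matrix ι ι R) (S T : Matrix n n R) :
    A ⊗ₖ S * (1 ⊗ₖ T) + (1 ⊗ₖ T) * (A ⊗ₖ S) = A ⊗ₖ (S * T + T * S) := by
  rw [← mul_kronecker_mul, ← mul_kronecker_mul, mul_one, one_mul, ← kronecker_add]

theorem kronecker_pauli_anticommute (X Z : Matrix ι ι R) :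
    (X ⊗ₖ pauliX + Z ⊗ₖ pauliZ) * (1 ⊗ₖ symplecticJ) +
      (1 ⊗ₖ symplecticJ) * (X ⊗ₖ pauliX + Z ⊗ₖ pauliZ) = 0 := by
  rw [add_mul, mul_add, add_add_add_comm, kronecker_mul_one_kronecker_add_one_kronecker_mul,
    kronecker_mul_one_kronecker_add_one_kronecker_mul,
    pauliX_mul_symplecticJ_add_symplecticJ_mul_pauliX,
    pauliZ_mul_symplecticJ_add_symplecticJ_mul_pauliZ, kronecker_zero, kronecker_zero, add_zero]

end CommRing

end Matrix

/-- A real antisymmetric β anticommutes with Ω = Iₙ ⊗ J iff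
    β = X ⊗ σₓ + Z ⊗ σ_z for some real antisymmetric X, Z. -/
theorem stmt3 (n : ℕ) (J σx σz : Matrix (Fin 2) (Fin 2) ℝ)
    (hJ : J = !![0, 1; -1, 0]) (hσx : σx = !![0, 1; 1, 0]) (hσz : σz = !![1, 0; 0, -1])
    (Ω β : Matrix (Fin n × Fin 2) (Fin n × Fin 2) ℝ)
    (hΩ : Ω = (1 : Matrix (Fin n) (Fin n) ℝ) ⊗ₖ J)
    (hanti : βᵀ = -β) :
    β * Ω + Ω * β = 0 ↔
      ∃ X Z : Matrix (Fin n) (Fin n) ℝ,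
        Xᵀ = -X ∧ Zᵀ = -Z ∧ β = X ⊗ₖ σx + Z ⊗ₖ σz := by
  obtain rfl : J = symplecticJ := hJ
  obtain rfl : σx = pauliX := hσx
  obtain rfl : σz = pauliZ := hσz
  subst hΩ
  constructor
  · intro h
    have hβ := eq_kronecker_pauli_of_anticommute h
    rw [hβ, transpose_kronecker_pauli_eq_neg_iff] at hanti
    exact ⟨_, _, hanti.1, hanti.2, hβ⟩
  · rintro ⟨X, Z, -, -, rfl⟩
    exact kronecker_pauli_anticommute X Z
end

section
/- Let Z and X be real antisymmetric n×n matrices and let U be a complex unitary n×n matrix such that U(Z+iX)Uᵀ = Λ ⊗ J where Λ is a real diagonal (n/2)×(n/2) matrix and J = [[0,1],[-1,0]] (Hua–Youla block form). Write U* = c + is with c, s real, and set R = c ⊗ I₂ + s ⊗ J. Then R(X ⊗ σ_x + Z ⊗ σ_z)Rᵀ = (Λ ⊗ J) ⊗ σ_z. -/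
open Matrix Kronecker Complex

/-!
Conjugating `U* = c + is` gives `U = c - is`, so `U(Z+iX)Uᵀ` has real part
`cZcᵀ + sXcᵀ + cXsᵀ - sZsᵀ` and imaginary part `cXcᵀ - sZcᵀ - cZsᵀ - sXsᵀ`. Expanding
`R(X ⊗ σx + Z ⊗ σz)Rᵀ` with the relations `Jσx = σxJᵀ = σz` and `Jσz = σzJᵀ = -σx` yields
exactly `Re(U(Z+iX)Uᵀ) ⊗ σz + Im(U(Z+iX)Uᵀ) ⊗ σx`, and the block form says that these parts
are `Λ ⊗ J` and `0`.
-/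

namespace Matrix

variable {m n : Type*}

lemma eq_map_ofReal_sub_I_smul_of_map_conj {U : Matrix m n ℂ} {c s : Matrix m n ℝ}
    (h : U.map (starRingEnd ℂ) = c.map ofReal + I • s.map ofReal) :
    U = c.map ofReal - I • s.map ofReal := by
  ext i j
  have hij := congrArg (starRingEnd ℂ) (congrFun (congrFun h i) j)
  simpa [sub_eq_add_neg] using hij

lemma map_ofReal_add_I_smul_eq_map_ofReal_iff {A B C : Matrix m n ℝ} :
    A.map ofReal + I • B.map ofReal = C.map ofReal ↔ A = C ∧ B = 0 := by
  constructor
  · intro h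
    constructor <;> ext i j
    · simpa using congrArg re (congrFun (congrFun h i) j)
    · simpa using congrArg im (congrFun (congrFun h i) j)
  · rintro ⟨rfl, rfl⟩
    simp

lemma kronecker_neg {p q α : Type*} [Ring α] (A : Matrix m n α) (B : Matrix p q α) :
    A ⊗ₖ (-B) = -(A ⊗ₖ B) := by
  ext; simp

lemma sub_kronecker {p q α : Type*} [Ring α] (A₁ A₂ : Matrix m n α) (B : Matrix p q α) :
    (A₁ - A₂) ⊗ₖ B = A₁ ⊗ₖ B - A₂ ⊗ₖ B := by
  ext; simp [sub_mul]

variable [Fintype n]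

lemma map_ofReal_sub_I_smul_mul_add_I_smul_mul_transpose (c s Z X : Matrix n n ℝ) :
    (c.map ofReal - I • s.map ofReal) * (Z.map ofReal + I • X.map ofReal) *
        (c.map ofReal - I • s.map ofReal)ᵀ =
      (c * Z * cᵀ + s * X * cᵀ + c * X * sᵀ - s * Z * sᵀ).map ofReal +
        I • (c * X * cᵀ - s * Z * cᵀ - c * Z * sᵀ - s * X * sᵀ).map ofReal := by
  have map_mul : ∀ A B : Matrix n n ℝ, (A * B).map ofReal = A.map ofReal * B.map ofReal :=
    fun _ _ => Matrix.map_mul (f := ofRealHom)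
  simp only [Matrix.map_add _ ofReal_add, Matrix.map_sub _ ofReal_sub, map_mul, transpose_map]
  simp only [transpose_sub, transpose_smul, Matrix.sub_mul, Matrix.mul_sub, Matrix.add_mul,
    Matrix.mul_add, Matrix.smul_mul, Matrix.mul_smul, smul_smul, I_mul_I, neg_smul, one_smul,
    smul_sub, smul_add, smul_neg, Matrix.neg_mul]
  abel

lemma kronecker_one_add_kronecker_J_conj_pauli (c s Z X : Matrix n n ℝ) :
    (c ⊗ₖ (1 : Matrix (Fin 2) (Fin 2) ℝ) + s ⊗ₖ !![0, 1; -1, 0]) *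
        (X ⊗ₖ !![0, 1; 1, 0] + Z ⊗ₖ !![1, 0; 0, -1]) *
        (c ⊗ₖ (1 : Matrix (Fin 2) (Fin 2) ℝ) + s ⊗ₖ !![0, 1; -1, 0])ᵀ =
      (c * Z * cᵀ + s * X * cᵀ + c * X * sᵀ - s * Z * sᵀ) ⊗ₖ !![1, 0; 0, -1] +
        (c * X * cᵀ - s * Z * cᵀ - c * Z * sᵀ - s * X * sᵀ) ⊗ₖ !![0, 1; 1, 0] := by
  set J : Matrix (Fin 2) (Fin 2) ℝ := !![0, 1; -1, 0]
  set σx : Matrix (Fin 2) (Fin 2) ℝ := !![0, 1; 1, 0]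
  set σz : Matrix (Fin 2) (Fin 2) ℝ := !![1, 0; 0, -1]
  have hσxJ : σx * Jᵀ = σz := by
    ext i j; fin_cases i <;> fin_cases j <;> simp [J, σx, σz, mul_apply]
  have hJσx : J * σx = σz := by
    ext i j; fin_cases i <;> fin_cases j <;> simp [J, σx, σz, mul_apply]
  have hσzJ : σz * Jᵀ = -σx := by
    ext i j; fin_cases i <;> fin_cases j <;> simp [J, σx, σz, mul_apply]
  have hJσz : J * σz = -σx := by
    ext i j; fin_cases i <;> fin_cases j <;> simp [J, σx, σz, mul_apply]
  simp only [transpose_add, ← kroneckerMap_transpose, transpose_one, Matrix.add_mul, Matrix.mul_add,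
    ← mul_kronecker_mul, Matrix.one_mul, Matrix.mul_one, hσxJ, hJσx, hσzJ, hJσz, Matrix.neg_mul,
    kronecker_neg, sub_kronecker, add_kronecker]
  abel

end Matrix

theorem stmt6_general (m : ℕ) (J σx σz : Matrix (Fin 2) (Fin 2) ℝ)
    (hJ : J = !![0, 1; -1, 0]) (hσx : σx = !![0, 1; 1, 0]) (hσz : σz = !![1, 0; 0, -1])
    (Z X : Matrix (Fin m × Fin 2) (Fin m × Fin 2) ℝ)
    (U : Matrix (Fin m × Fin 2) (Fin m × Fin 2) ℂ)
    (Λ : Matrix (Fin m) (Fin m) ℝ)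
    (hblock : U * (Z.map Complex.ofReal + Complex.I • X.map Complex.ofReal) * Uᵀ =
      (Λ ⊗ₖ J).map Complex.ofReal)
    (c s : Matrix (Fin m × Fin 2) (Fin m × Fin 2) ℝ)
    (hcs : U.map (starRingEnd ℂ) = c.map Complex.ofReal + Complex.I • s.map Complex.ofReal)
    (R : Matrix ((Fin m × Fin 2) × Fin 2) ((Fin m × Fin 2) × Fin 2) ℝ)
    (hR : R = c ⊗ₖ (1 : Matrix (Fin 2) (Fin 2) ℝ) + s ⊗ₖ J) :
    R * (X ⊗ₖ σx + Z ⊗ₖ σz) * Rᵀ = (Λ ⊗ₖ J) ⊗ₖ σz := by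
  subst hJ hσx hσz hR
  rw [eq_map_ofReal_sub_I_smul_of_map_conj hcs,
    map_ofReal_sub_I_smul_mul_add_I_smul_mul_transpose,
    map_ofReal_add_I_smul_eq_map_ofReal_iff] at hblock
  obtain ⟨hRe, hIm⟩ := hblock
  rw [kronecker_one_add_kronecker_J_conj_pauli, hRe, hIm, zero_kronecker, add_zero]

/-- With n = 2m, if U(Z+iX)Uᵀ = Λ ⊗ J is the Hua–Youla block form,
    U* = c + is, and R = c ⊗ I₂ + s ⊗ J, then R(X ⊗ σₓ + Z ⊗ σ_z)Rᵀ = (Λ ⊗ J) ⊗ σ_z. -/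
theorem stmt6 (m : ℕ) (J σx σz : Matrix (Fin 2) (Fin 2) ℝ)
    (hJ : J = !![0, 1; -1, 0]) (hσx : σx = !![0, 1; 1, 0]) (hσz : σz = !![1, 0; 0, -1])
    (Z X : Matrix (Fin m × Fin 2) (Fin m × Fin 2) ℝ)
    (hZ : Zᵀ = -Z) (hX : Xᵀ = -X)
    (U : Matrix (Fin m × Fin 2) (Fin m × Fin 2) ℂ) (hU : Uᴴ * U = 1)
    (Λ : Matrix (Fin m) (Fin m) ℝ) (hΛ : Λ.IsDiag)
    (hblock : U * (Z.map Complex.ofReal + Complex.I • X.map Complex.ofReal) * Uᵀ =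
      (Λ ⊗ₖ J).map Complex.ofReal)
    (c s : Matrix (Fin m × Fin 2) (Fin m × Fin 2) ℝ)
    (hcs : U.map (starRingEnd ℂ) = c.map Complex.ofReal + Complex.I • s.map Complex.ofReal)
    (R : Matrix ((Fin m × Fin 2) × Fin 2) ((Fin m × Fin 2) × Fin 2) ℝ)
    (hR : R = c ⊗ₖ (1 : Matrix (Fin 2) (Fin 2) ℝ) + s ⊗ₖ J) :
    R * (X ⊗ₖ σx + Z ⊗ₖ σz) * Rᵀ = (Λ ⊗ₖ J) ⊗ₖ σz :=
  stmt6_general m J σx σz hJ hσx hσz Z X U Λ hblock c s hcs R hR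
end

section
/- Define ξ(ψ) as the infimum of ‖a‖₁² over all finite decompositions |ψ⟩ = Σⱼ aⱼ |sⱼ⟩ into normalized states |sⱼ⟩ from a fixed set S of unit vectors whose span contains |ψ⟩. If |ω⟩ is any unit vector with ⟨ω|ψ⟩ ≠ 0 and F(ω) := sup over s ∈ S of |⟨ω|s⟩|², then ξ(ψ) ≥ |⟨ω|ψ⟩|² / F(ω) is NOT generally valid as an equality, but the lower bound ξ(ψ) ≥ |⟨ω|ψ⟩|² / F(ω) always holds. -/
/-!
Expanding `⟪ω, ψ⟫ = ∑ⱼ aⱼ ⟪ω, sⱼ⟫` and applying the triangle inequality gives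
`|⟪ω, ψ⟫| ≤ ‖a‖₁ √F(ω)` for every decomposition of `ψ` over `S`; squaring and dividing by `F(ω)`
bounds every element of the set whose infimum is `ξ(ψ)`.
-/

open scoped InnerProductSpace

section

variable {𝕜 E ι : Type*} [RCLike 𝕜] [NormedAddCommGroup E] [InnerProductSpace 𝕜 E]

theorem norm_inner_sum_smul_le (ω : E) (t : Finset ι) (a : ι → 𝕜) (s : ι → E) {c : ℝ}
    (hc : ∀ j ∈ t, ‖⟪ω, s j⟫_𝕜‖ ≤ c) :
    ‖⟪ω, ∑ j ∈ t, a j • s j⟫_𝕜‖ ≤ (∑ j ∈ t, ‖a j‖) * c :=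
  calc ‖⟪ω, ∑ j ∈ t, a j • s j⟫_𝕜‖ = ‖∑ j ∈ t, a j * ⟪ω, s j⟫_𝕜‖ := by
        simp only [inner_sum, inner_smul_right]
    _ ≤ ∑ j ∈ t, ‖a j‖ * ‖⟪ω, s j⟫_𝕜‖ := norm_sum_le_of_le t fun j _ => (norm_mul _ _).le
    _ ≤ ∑ j ∈ t, ‖a j‖ * c := Finset.sum_le_sum fun j hj => by gcongr; exact hc j hj
    _ = (∑ j ∈ t, ‖a j‖) * c := (Finset.sum_mul _ _ _).symm

theorem sq_norm_inner_sum_smul_le (ω : E) (t : Finset ι) (a : ι → 𝕜) (s : ι → E) {F : ℝ}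
    (hF₀ : 0 ≤ F) (hF : ∀ j ∈ t, ‖⟪ω, s j⟫_𝕜‖ ^ 2 ≤ F) :
    ‖⟪ω, ∑ j ∈ t, a j • s j⟫_𝕜‖ ^ 2 ≤ (∑ j ∈ t, ‖a j‖) ^ 2 * F := by
  have hroot : ‖⟪ω, ∑ j ∈ t, a j • s j⟫_𝕜‖ ≤ (∑ j ∈ t, ‖a j‖) * √F :=
    norm_inner_sum_smul_le ω t a s fun j hj => Real.le_sqrt_of_sq_le (hF j hj)
  calc ‖⟪ω, ∑ j ∈ t, a j • s j⟫_𝕜‖ ^ 2 ≤ ((∑ j ∈ t, ‖a j‖) * √F) ^ 2 := by gcongr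
    _ = (∑ j ∈ t, ‖a j‖) ^ 2 * F := by rw [mul_pow, Real.sq_sqrt hF₀]

theorem bddAbove_sq_norm_inner {S : Set E} (hS : ∀ s ∈ S, ‖s‖ = 1) (ω : E) :
    BddAbove {r | ∃ s ∈ S, r = ‖⟪ω, s⟫_𝕜‖ ^ 2} := by
  refine ⟨‖ω‖ ^ 2, ?_⟩
  rintro r ⟨s, hs, rfl⟩
  have h := norm_inner_le_norm (𝕜 := 𝕜) ω s
  rw [hS s hs, mul_one] at h
  gcongr

end

theorem stmt10_general {H : Type*} [NormedAddCommGroup H] [InnerProductSpace ℂ H]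
    (S : Set H) (hS : ∀ s ∈ S, ‖s‖ = 1)
    (ψ ω : H)
    (ξset : Set ℝ)
    (hξ : ξset = {r | ∃ (k : ℕ) (a : Fin k → ℂ) (s : Fin k → H),
      (∀ j, s j ∈ S) ∧ ψ = ∑ j, a j • s j ∧ r = (∑ j, ‖a j‖) ^ 2})
    (hspan : ξset.Nonempty)
    (F : ℝ) (hF : F = sSup {r | ∃ s ∈ S, r = ‖(⟪ω, s⟫_ℂ : ℂ)‖ ^ 2}) :
    ‖(⟪ω, ψ⟫_ℂ : ℂ)‖ ^ 2 / F ≤ sInf ξset := by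
  subst hξ hF
  refine le_csInf hspan ?_
  rintro r ⟨k, a, s, hsS, rfl, rfl⟩
  have hF₀ : 0 ≤ sSup {r | ∃ s ∈ S, r = ‖⟪ω, s⟫_ℂ‖ ^ 2} :=
    Real.sSup_nonneg fun r ⟨s, _, hr⟩ => hr ▸ sq_nonneg _
  refine div_le_of_le_mul₀ hF₀ (sq_nonneg _) ?_
  exact sq_norm_inner_sum_smul_le ω _ a s hF₀ fun j _ =>
    le_csSup (bddAbove_sq_norm_inner hS ω) ⟨s j, hsS j, rfl⟩

/-- the extent lower bound ξ(ψ) ≥ |⟨ω|ψ⟩|² / F(ω) always holds. -/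
theorem stmt10 {H : Type*} [NormedAddCommGroup H] [InnerProductSpace ℂ H]
    [FiniteDimensional ℂ H]
    (S : Set H) (hS : ∀ s ∈ S, ‖s‖ = 1)
    (ψ ω : H) (hω : ‖ω‖ = 1)
    (ξset : Set ℝ)
    (hξ : ξset = {r | ∃ (k : ℕ) (a : Fin k → ℂ) (s : Fin k → H),
      (∀ j, s j ∈ S) ∧ ψ = ∑ j, a j • s j ∧ r = (∑ j, ‖a j‖) ^ 2})
    (hspan : ξset.Nonempty)
    (F : ℝ) (hF : F = sSup {r | ∃ s ∈ S, r = ‖(⟪ω, s⟫_ℂ : ℂ)‖ ^ 2})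
    (hover : ⟪ω, ψ⟫_ℂ ≠ 0) :
    ‖(⟪ω, ψ⟫_ℂ : ℂ)‖ ^ 2 / F ≤ sInf ξset :=
  stmt10_general S hS ψ ω ξset hξ hspan F hF
end

section
/- For all real θ and λⱼ, and an orthonormal family, the 4-qubit vectors |A(θ)⟩ = (1/2)(e^{-iθ/4}|0000⟩ + e^{iθ/4}|0011⟩ + e^{iθ/4}|1100⟩ + e^{i3θ/4}|1111⟩) and |B(θ)⟩ = (1/2)(e^{-iθ/4}|0000⟩ - e^{iθ/4}|0011⟩ - e^{iθ/4}|1100⟩ + e^{i3θ/4}|1111⟩) are orthonormal unit vectors, and cos(θ/4)|A(θ)⟩ + i sin(θ/4)|B(θ)⟩ = (1/2)(|0000⟩ + |1100⟩ + |0011⟩ + e^{iθ}|1111⟩). -/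
/-! With `u = e^{iθ/4}`, the coefficients of `A` on the orthonormal vectors `|0000⟩, |0011⟩,
|1100⟩, |1111⟩` are the phases `u⁻¹, u, u, u³` halved, and those of `B` are the same times the
signs `+, -, -, +`. Unimodular coefficients give `‖A‖ = ‖B‖ = √4 / 2 = 1`, and `⟪A, B⟫` is a
quarter of the sum of the signs, which is `0`. Since `cos(θ/4) ± i sin(θ/4) = u^{±1}`, the
combination `cos(θ/4) A + i sin(θ/4) B` has coefficients `u⁻¹u, uu⁻¹, uu⁻¹, u³u`, halved. -/

open scoped InnerProductSpace

section Orthonormal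

variable {ι E : Type*} [Fintype ι] [NormedAddCommGroup E] [InnerProductSpace ℂ E] {v : ι → E}

theorem Orthonormal.inner_sum_smul_mul_of_norm_eq_one (hv : Orthonormal ℂ v) {a : ι → ℂ}
    (ha : ∀ i, ‖a i‖ = 1) (s : ι → ℂ) :
    ⟪∑ i, a i • v i, ∑ i, (s i * a i) • v i⟫_ℂ = ∑ i, s i := by
  rw [hv.inner_sum]
  refine Finset.sum_congr rfl fun i _ => ?_
  rw [mul_left_comm, Complex.conj_mul', ha i]
  simp

theorem Orthonormal.norm_sum_smul_of_norm_eq_one (hv : Orthonormal ℂ v) {a : ι → ℂ}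
    (ha : ∀ i, ‖a i‖ = 1) : ‖∑ i, a i • v i‖ = √(Fintype.card ι) := by
  have hinner : ⟪∑ i, a i • v i, ∑ i, a i • v i⟫_ℂ = Fintype.card ι := by
    simpa using hv.inner_sum_smul_mul_of_norm_eq_one ha 1
  have hsq : ‖∑ i, a i • v i‖ ^ 2 = Fintype.card ι := by
    rw [← Complex.ofReal_inj]
    push_cast
    exact (inner_self_eq_norm_sq_to_K _).symm.trans hinner
  rw [← hsq, Real.sqrt_sq (norm_nonneg _)]

end Orthonormal

theorem Complex.ofReal_cos_add_I_mul_ofReal_sin (x : ℝ) :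
    (Real.cos x : ℂ) + I * Real.sin x = exp (I * x) := by
  rw [mul_comm I (x : ℂ), ← cos_add_sin_I, ofReal_cos, ofReal_sin, mul_comm]

theorem Complex.ofReal_cos_sub_I_mul_ofReal_sin (x : ℝ) :
    (Real.cos x : ℂ) - I * Real.sin x = exp (-I * x) := by
  rw [show -I * (x : ℂ) = -x * I by ring, ← cos_sub_sin_I, ofReal_cos, ofReal_sin, mul_comm I]

theorem cos_smul_add_I_mul_sin_smul_eq {M : Type*} [AddCommGroup M] [Module ℂ M] (θ : ℝ)
    (x₀ x₃ x₁₂ x₁₅ : M) :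
    (Real.cos (θ / 4) : ℂ) • ((1 / 2 : ℂ) •
      (Complex.exp (-Complex.I * θ / 4) • x₀ + Complex.exp (Complex.I * θ / 4) • x₃ +
       Complex.exp (Complex.I * θ / 4) • x₁₂ + Complex.exp (Complex.I * (3 * θ) / 4) • x₁₅)) +
      (Complex.I * Real.sin (θ / 4)) • ((1 / 2 : ℂ) •
      (Complex.exp (-Complex.I * θ / 4) • x₀ - Complex.exp (Complex.I * θ / 4) • x₃ -
       Complex.exp (Complex.I * θ / 4) • x₁₂ + Complex.exp (Complex.I * (3 * θ) / 4) • x₁₅)) =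
      (1 / 2 : ℂ) • (x₀ + x₁₂ + x₃ + Complex.exp (Complex.I * θ) • x₁₅) := by
  have hcis := Complex.ofReal_cos_add_I_mul_ofReal_sin (θ / 4)
  have hcis' := Complex.ofReal_cos_sub_I_mul_ofReal_sin (θ / 4)
  push_cast [← mul_div_assoc] at hcis hcis'
  have hinv : Complex.exp (Complex.I * θ / 4) * Complex.exp (-Complex.I * θ / 4) = 1 := by
    rw [← Complex.exp_add]; ring_nf; exact Complex.exp_zero
  have hpow : Complex.exp (Complex.I * θ / 4) * Complex.exp (Complex.I * (3 * θ) / 4) =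
      Complex.exp (Complex.I * θ) := by
    rw [← Complex.exp_add]; ring_nf
  match_scalars
  · linear_combination (Complex.exp (-Complex.I * θ / 4) * hcis + hinv) / 2
  · linear_combination (Complex.exp (Complex.I * θ / 4) * hcis' + hinv) / 2
  · linear_combination (Complex.exp (Complex.I * θ / 4) * hcis' + hinv) / 2
  · linear_combination (Complex.exp (Complex.I * (3 * θ) / 4) * hcis + hpow) / 2

/-- the states |A(θ)⟩ and |B(θ)⟩ are orthonormal and
    cos(θ/4)|A(θ)⟩ + i sin(θ/4)|B(θ)⟩ = |M_θ⟩, the matchgate magic state.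
    The 4-qubit computational basis of ℂ¹⁶ is indexed so that
    |0000⟩ = e 0, |0011⟩ = e 3, |1100⟩ = e 12, |1111⟩ = e 15. -/
theorem stmt17 (θ : ℝ)
    (e : Fin 16 → EuclideanSpace ℂ (Fin 16))
    (he : ∀ i, e i = EuclideanSpace.single i 1)
    (A B : EuclideanSpace ℂ (Fin 16))
    (hA : A = (1 / 2 : ℂ) •
      (Complex.exp (-Complex.I * θ / 4) • e 0 + Complex.exp (Complex.I * θ / 4) • e 3 +
       Complex.exp (Complex.I * θ / 4) • e 12 + Complex.exp (Complex.I * (3 * θ) / 4) • e 15))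
    (hB : B = (1 / 2 : ℂ) •
      (Complex.exp (-Complex.I * θ / 4) • e 0 - Complex.exp (Complex.I * θ / 4) • e 3 -
       Complex.exp (Complex.I * θ / 4) • e 12 + Complex.exp (Complex.I * (3 * θ) / 4) • e 15)) :
    ‖A‖ = 1 ∧ ‖B‖ = 1 ∧ ⟪A, B⟫_ℂ = 0 ∧
      (Real.cos (θ / 4) : ℂ) • A + (Complex.I * Real.sin (θ / 4)) • B =
        (1 / 2 : ℂ) • (e 0 + e 12 + e 3 + Complex.exp (Complex.I * θ) • e 15) := by
  set v : Fin 4 → EuclideanSpace ℂ (Fin 16) := ![e 0, e 3, e 12, e 15]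
  set a : Fin 4 → ℂ := ![Complex.exp (-Complex.I * θ / 4), Complex.exp (Complex.I * θ / 4),
    Complex.exp (Complex.I * θ / 4), Complex.exp (Complex.I * (3 * θ) / 4)]
  set s : Fin 4 → ℂ := ![1, -1, -1, 1]
  have hv : Orthonormal ℂ v := by
    have := (EuclideanSpace.orthonormal_single (𝕜 := ℂ) (ι := Fin 16)).comp
      ![0, 3, 12, 15] (by decide)
    convert this using 1
    ext i : 1
    fin_cases i <;> simp [v, he]
  have ha : ∀ i, ‖a i‖ = 1 := by
    intro i; fin_cases i <;> simp [a, Complex.norm_exp]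
  have hsa : ∀ i, ‖s i * a i‖ = 1 := by
    intro i; fin_cases i <;> simp [s, ha]
  have hA' : A = (1 / 2 : ℂ) • ∑ i, a i • v i := by
    simp [hA, Fin.sum_univ_four, a, v]
  have hB' : B = (1 / 2 : ℂ) • ∑ i, (s i * a i) • v i := by
    simp [hB, Fin.sum_univ_four, a, v, s, sub_eq_add_neg]
  refine ⟨?_, ?_, ?_, ?_⟩
  · rw [hA', norm_smul, hv.norm_sum_smul_of_norm_eq_one ha]
    norm_num
  · rw [hB', norm_smul, hv.norm_sum_smul_of_norm_eq_one hsa]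
    norm_num
  · rw [hA', hB', inner_smul_left, inner_smul_right, hv.inner_sum_smul_mul_of_norm_eq_one ha,
      Fin.sum_univ_four]
    simp [s]
  · subst hA hB
    exact cos_smul_add_I_mul_sin_smul_eq θ (e 0) (e 3) (e 12) (e 15)
end
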